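/- arXiv:2504.11841 — 8 statements merged into one kernel-verified Lean document; each statement's English description precedes it below -/
import Mathlib

section
/- Let R = k[T]/T^p and M a finitely generated R-module. For a nonzero m ∈ M of nilpotency index α > 0, the following are equivalent: (1) the submodule ⟨m⟩ generated by m is a direct summand of M; (2) for all i < α, the depth of T^i m equals i; (3) the depth of T^{α-1} m equals α - 1. -/
open Polynomial

noncomputable section

/-- `Mmod k i` is the `k[T]`-module `M_i = k[T]/(T^i)`. -/
abbrev Mmod (k : Type) [Field k] (i : ℕ) : Type :=
  Polynomial k ⧸ Ideal.span {(X : Polynomial k) ^ i}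

/-- A permutation `kC_p`-module: a direct sum of copies of `kC_p = k[T]/T^p`
and the trivial module `k = k[T]/T`. -/
def IsPermMod (k : Type) [Field k] (p : ℕ) (M : Type) [AddCommGroup M]
    [Module (Polynomial k) M] : Prop :=
  ∃ r s : ℕ,
    Nonempty (M ≃ₗ[Polynomial k] ((Fin r → Mmod k p) × (Fin s → Mmod k 1)))

/-- `m` has depth `i`: `m ∈ T^i M` but `m ∉ T^{i+1} M`. -/
def HasDepth (k : Type) [Field k] {M : Type} [AddCommGroup M] [Module (Polynomial k) M]
    (i : ℕ) (m : M) : Prop :=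
  (∃ y : M, m = (X : Polynomial k) ^ i • y) ∧ ¬ ∃ y : M, m = (X : Polynomial k) ^ (i + 1) • y

/-- `α` is the nilpotency index of `m` with respect to `T`. -/
def IsIndex (k : Type) [Field k] {M : Type} [AddCommGroup M] [Module (Polynomial k) M]
    (α : ℕ) (m : M) : Prop :=
  (X : Polynomial k) ^ α • m = 0 ∧ ∀ β < α, (X : Polynomial k) ^ β • m ≠ 0

/-- `M` admits a resolution `0 → P_s → ⋯ → P_0 → M → 0` by permutation `kC_p`-modules. -/
def HasPermRes (k : Type) [Field k] (p : ℕ) :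
    (s : ℕ) → (M : Type) → [AddCommGroup M] → [Module (Polynomial k) M] → Prop
  | 0, M, _, _ => IsPermMod k p M
  | (s + 1), M, _, _ =>
      ∃ (P : Type) (_ : AddCommGroup P) (_ : Module (Polynomial k) P)
        (f : P →ₗ[Polynomial k] M), IsPermMod k p P ∧ Function.Surjective f ∧
          HasPermRes k p s (LinearMap.ker f)

/-- The `p`-permutation dimension of `M`: minimal length of a permutation resolution. -/
def ppdim (k : Type) [Field k] (p : ℕ) (M : Type) [AddCommGroup M]
    [Module (Polynomial k) M] : ℕ :=
  sInf {s | HasPermRes k p s M}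

/-- The `p`-distance function: `f 1 = f p = 0` and
`f x = min (f (p-x)) (f (p-x+1)) + 1` for `2 ≤ x ≤ p-1`. -/
def IsSizeFun (p : ℕ) (f : ℕ → ℕ) : Prop :=
  f 1 = 0 ∧ f p = 0 ∧ ∀ x, 2 ≤ x → x ≤ p - 1 → f x = min (f (p - x)) (f (p - x + 1)) + 1

/-!
(1 ⇒ 2) If `X^i m = X^(i+1) y`, projecting `y` onto `⟨m⟩` along a complement gives
`X^i m = (X f) • X^i m`, and iterating `α` times shows `X^i m = 0`.

(3 ⇒ 1) Since `X^(α-1) m ∉ X^α M`, some `k`-linear functional `ℓ` kills `X^α M` and takes the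
value `1` at `X^(α-1) m`. Frobenius duality for `k[X]/(X^α)` turns `ℓ` into the map
`φ x = ∑ ℓ(X^(α-1-i) x) X^i`, which is `k[X]`-linear modulo `X^α`. As `φ m ≡ 1 (mod X)`, some
`v` inverts `φ m` modulo `X^α`, which kills `m`; then `x ↦ (φ x * v) • m` is a retraction of `M`
onto `⟨m⟩`.
-/

theorem eq_zero_of_eq_mul_smul {R M : Type*} [CommSemiring R] [AddCommMonoid M] [Module R M]
    {a f : R} {x : M} {n : ℕ} (hx : x = (a * f) • x) (hn : a ^ n • x = 0) : x = 0 := by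
  have hpow : ∀ j : ℕ, x = (a * f) ^ j • x := by
    intro j
    induction j with
    | zero => rw [pow_zero, one_smul]
    | succ j ih => rw [pow_succ, mul_smul, ← hx, ← ih]
  rw [hpow n, mul_pow, mul_comm, mul_smul, hn, smul_zero]

theorem pow_smul_eq_zero_of_isCompl {R M : Type*} [CommRing R] [AddCommGroup M] [Module R M]
    {m y : M} {N : Submodule R M} (hN : IsCompl (Submodule.span R {m}) N) {a : R} {n i : ℕ}
    (hm : a ^ n • m = 0) (hy : a ^ i • m = a ^ (i + 1) • y) : a ^ i • m = 0 := by
  set π := Submodule.projectionOnto _ _ hN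
  obtain ⟨f, hf⟩ := Submodule.mem_span_singleton.1 (π y).2
  refine eq_zero_of_eq_mul_smul (f := f) (n := n) ?_ (by rw [smul_comm, hm, smul_zero])
  have hmem : a ^ i • m ∈ Submodule.span R {m} :=
    Submodule.smul_mem _ _ (Submodule.mem_span_singleton_self m)
  calc a ^ i • m = π (a ^ i • m) :=
        congrArg Subtype.val (Submodule.projectionOnto_apply_left hN ⟨_, hmem⟩).symm
    _ = a ^ (i + 1) • (f • m) := by rw [hy, map_smul, hf]; rfl
    _ = (a * f) • a ^ i • m := by rw [smul_smul, smul_smul, pow_succ', mul_right_comm]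

theorem exists_mul_smul_eq_self {R M : Type*} [CommRing R] [AddCommGroup M] [Module R M]
    {a u : R} {m : M} {n : ℕ} (hm : a ^ n • m = 0) (hu : a ∣ u - 1) :
    ∃ v : R, (u * v) • m = m := by
  obtain ⟨w, hw⟩ := hu
  refine ⟨∑ i ∈ Finset.range n, (1 - u) ^ i, ?_⟩
  have hgeom := mul_neg_geom_sum (1 - u) n
  rw [sub_sub_cancel] at hgeom
  have hnil : (1 - u) ^ n = (-w) ^ n * a ^ n := by
    rw [← mul_pow, neg_mul, mul_comm, ← hw, neg_sub]
  rw [hgeom, sub_smul, one_smul, hnil, mul_smul, hm, smul_zero, sub_zero]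

theorem isCompl_span_singleton_ker {R M : Type*} [CommRing R] [AddCommGroup M] [Module R M]
    {m : M} (ρ : M →ₗ[R] M) (hρ : ∀ x, ρ x ∈ Submodule.span R {m}) (hρm : ρ m = m) :
    IsCompl (Submodule.span R {m}) (LinearMap.ker ρ) := by
  rw [← LinearMap.ker_codRestrict _ ρ hρ]
  refine LinearMap.isCompl_of_proj fun ⟨x, hx⟩ => ?_
  obtain ⟨r, rfl⟩ := Submodule.mem_span_singleton.1 hx
  exact Subtype.ext (by simp [hρm])

def LinearMap.ofMapXSMul {R M N : Type*} [CommSemiring R] [AddCommMonoid M] [AddCommMonoid N]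
    [Module R M] [Module R[X] M] [IsScalarTower R R[X] M]
    [Module R N] [Module R[X] N] [IsScalarTower R R[X] N]
    (f : M →ₗ[R] N) (hf : ∀ x, f ((X : R[X]) • x) = (X : R[X]) • f x) : M →ₗ[R[X]] N where
  toFun := f
  map_add' := f.map_add
  map_smul' p := by
    simp only [RingHom.id_apply]
    induction p using Polynomial.induction_on with
    | C c => intro x; rw [C_eq_algebraMap, algebraMap_smul, algebraMap_smul, map_smul]
    | add p q hp hq => intro x; rw [add_smul, map_add, hp, hq, add_smul]
    | monomial n c h => intro x; rw [pow_succ, ← mul_assoc, mul_smul, h, hf, ← mul_smul]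

section PolyForm

variable {k M : Type*} [Field k] [AddCommGroup M] [Module k M] [Module k[X] M]
  [IsScalarTower k k[X] M]

/-- The image of `ℓ` under the Frobenius duality of `k[X]/(X^(n+1))`, with values represented
by polynomials of degree at most `n`. -/
def polyForm (ℓ : M →ₗ[k] k) (n : ℕ) : M →ₗ[k] k[X] :=
  ∑ i ∈ Finset.range (n + 1),
    monomial (R := k) i ∘ₗ ℓ ∘ₗ DistribSMul.toLinearMap k M ((X : k[X]) ^ (n - i))

theorem polyForm_apply (ℓ : M →ₗ[k] k) (n : ℕ) (x : M) :
    polyForm ℓ n x = ∑ i ∈ Finset.range (n + 1), monomial i (ℓ ((X : k[X]) ^ (n - i) • x)) := by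
  simp [polyForm]

theorem coeff_polyForm_zero (ℓ : M →ₗ[k] k) (n : ℕ) (x : M) :
    (polyForm ℓ n x).coeff 0 = ℓ ((X : k[X]) ^ n • x) := by
  simp [polyForm_apply, coeff_monomial]

theorem polyForm_X_smul_add {ℓ : M →ₗ[k] k} {n : ℕ}
    (hℓ : ∀ y : M, ℓ ((X : k[X]) ^ (n + 1) • y) = 0) (x : M) :
    polyForm ℓ n ((X : k[X]) • x) + monomial (n + 1) (ℓ x) = X * polyForm ℓ n x := by
  rw [polyForm_apply, polyForm_apply, Finset.sum_range_succ', Finset.mul_sum,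
    Finset.sum_range_succ]
  have hshift : ∀ j ∈ Finset.range n,
      monomial (j + 1) (ℓ ((X : k[X]) ^ (n - (j + 1)) • (X : k[X]) • x)) =
        X * monomial (R := k) j (ℓ ((X : k[X]) ^ (n - j) • x)) := by
    intro j hj
    have hj' : n - (j + 1) + 1 = n - j := by grind
    rw [smul_smul, ← pow_succ, hj', X_mul_monomial]
  rw [Finset.sum_congr rfl hshift, Nat.sub_zero, smul_smul, ← pow_succ, hℓ, map_zero, add_zero,
    Nat.sub_self, pow_zero, one_smul, X_mul_monomial]

theorem exists_isCompl_span_singleton_of_functional {ℓ : M →ₗ[k] k} {n : ℕ} {m : M}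
    (hℓ : ∀ y : M, ℓ ((X : k[X]) ^ (n + 1) • y) = 0) (hm : (X : k[X]) ^ (n + 1) • m = 0)
    (hℓm : ℓ ((X : k[X]) ^ n • m) = 1) :
    ∃ N : Submodule k[X] M, IsCompl (Submodule.span k[X] {m}) N := by
  have hu : (X : k[X]) ∣ polyForm ℓ n m - 1 := by
    simpa [coeff_polyForm_zero, hℓm] using X_dvd_sub_C (p := polyForm ℓ n m)
  obtain ⟨v, hv⟩ := exists_mul_smul_eq_self hm hu
  have hvm : (X : k[X]) ^ (n + 1) • v • m = 0 := by rw [smul_comm, hm, smul_zero]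
  let ρ : M →ₗ[k[X]] M := ((polyForm ℓ n).smulRight (v • m)).ofMapXSMul fun x => by
    rw [LinearMap.smulRight_apply, LinearMap.smulRight_apply,
      eq_sub_of_add_eq (polyForm_X_smul_add hℓ x), sub_smul, mul_smul,
      ← C_mul_X_pow_eq_monomial, mul_smul, hvm, smul_zero, sub_zero]
  refine ⟨_, isCompl_span_singleton_ker ρ (fun x => ?_) ?_⟩
  · exact Submodule.smul_mem _ _ (Submodule.smul_mem _ _ (Submodule.mem_span_singleton_self m))
  · change polyForm ℓ n m • v • m = m
    rw [← mul_smul, hv]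

end PolyForm

theorem exists_isCompl_span_singleton_of_depth {k M : Type*} [Field k] [AddCommGroup M]
    [Module k[X] M] {m : M} {n : ℕ} (hm : (X : k[X]) ^ (n + 1) • m = 0)
    (hdepth : ¬∃ y : M, (X : k[X]) ^ n • m = (X : k[X]) ^ (n + 1) • y) :
    ∃ N : Submodule k[X] M, IsCompl (Submodule.span k[X] {m}) N := by
  let _ : Module k M := Module.compHom M (algebraMap k k[X])
  have : IsScalarTower k k[X] M := IsScalarTower.of_compHom k k[X] M
  have hW : (X : k[X]) ^ n • m ∉
      LinearMap.range (DistribSMul.toLinearMap k M ((X : k[X]) ^ (n + 1))) :=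
    fun ⟨y, hy⟩ => hdepth ⟨y, hy.symm⟩
  obtain ⟨ℓ, hℓm, hℓW⟩ := Submodule.exists_dual_map_eq_bot_of_notMem hW inferInstance
  refine exists_isCompl_span_singleton_of_functional (ℓ := (ℓ ((X : k[X]) ^ n • m))⁻¹ • ℓ)
    (fun y => ?_) hm (by simp [hℓm])
  have hy : ℓ ((X : k[X]) ^ (n + 1) • y) = 0 :=
    (Submodule.mem_bot k).1 (hℓW ▸ Submodule.mem_map_of_mem ⟨y, rfl⟩)
  simp [hy]

theorem stmt4_general (k : Type) [Field k]
    (M : Type) [AddCommGroup M] [Module (Polynomial k) M]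
    (m : M) (α : ℕ) (hα : 0 < α) (hidx : IsIndex k α m) :
    List.TFAE
      [∃ N : Submodule (Polynomial k) M, IsCompl (Submodule.span (Polynomial k) {m}) N,
       ∀ i < α, HasDepth k i ((X : Polynomial k) ^ i • m),
       HasDepth k (α - 1) ((X : Polynomial k) ^ (α - 1) • m)] := by
  obtain ⟨n, rfl⟩ : ∃ n, α = n + 1 := ⟨α - 1, by omega⟩
  obtain ⟨hkill, hne⟩ := hidx
  rw [Nat.add_sub_cancel]
  tfae_have 1 → 2 := fun ⟨_, hN⟩ i hi =>
    ⟨⟨m, rfl⟩, fun ⟨_, hy⟩ => hne i hi (pow_smul_eq_zero_of_isCompl hN hkill hy)⟩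
  tfae_have 2 → 3 := fun h => h n n.lt_succ_self
  tfae_have 3 → 1 := fun h => exists_isCompl_span_singleton_of_depth hkill h.2
  tfae_finish

/-- Over `R = k[T]/T^p`, for a nonzero `m` of nilpotency index `α > 0` in a finitely
generated module `M`, TFAE: `⟨m⟩` is a direct summand of `M`; `dep (T^i m) = i` for all
`i < α`; `dep (T^{α-1} m) = α - 1`. -/
theorem stmt4 (k : Type) [Field k] (p : ℕ) (hp : p.Prime) [CharP k p]
    (M : Type) [AddCommGroup M] [Module (Polynomial k) M] [Module.Finite (Polynomial k) M]
    (hann : ∀ m : M, (X : Polynomial k) ^ p • m = 0)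
    (m : M) (hm : m ≠ 0) (α : ℕ) (hα : 0 < α) (hidx : IsIndex k α m) :
    List.TFAE
      [∃ N : Submodule (Polynomial k) M, IsCompl (Submodule.span (Polynomial k) {m}) N,
       ∀ i < α, HasDepth k i ((X : Polynomial k) ^ i • m),
       HasDepth k (α - 1) ((X : Polynomial k) ^ (α - 1) • m)] :=
  stmt4_general k M m α hα hidx
end
end

section
/- Let P be a finitely generated permutation module over kC_p, i.e., P ≅ (kC_p)^r ⊕ k^s, identified as a module over R = k[T]/T^p. A nonzero element m ∈ P generates a direct summand of P if and only if either dep(Tm) = 1, or (dep(m) = 0 and T·m = 0). -/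
open Polynomial

noncomputable section

namespace Aux6

variable (k : Type) [Field k]

lemma mmod_xpow_smul (i n : ℕ) (hin : i ≤ n) (x : Mmod k i) :
    (X : Polynomial k) ^ n • x = 0 := by
  obtain ⟨f, rfl⟩ := Submodule.Quotient.mk_surjective _ x
  rw [← Submodule.Quotient.mk_smul, Submodule.Quotient.mk_eq_zero]
  exact Ideal.mem_span_singleton.mpr ((pow_dvd_pow _ hin).mul_right f)

lemma mmod_mk_eq_smul_iff (i : ℕ) (hi : 1 ≤ i) (f : Polynomial k) :
    (∃ c : Mmod k i, (Submodule.Quotient.mk f : Mmod k i) = (X : Polynomial k) • c) ↔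
      (X : Polynomial k) ∣ f := by
  constructor
  · rintro ⟨c, hc⟩
    obtain ⟨h, rfl⟩ := Submodule.Quotient.mk_surjective _ c
    rw [← Submodule.Quotient.mk_smul, Submodule.Quotient.eq] at hc
    obtain ⟨d, hd⟩ := Ideal.mem_span_singleton.mp hc
    have : f = X * h + X ^ i * d := by
      have := hd; rw [smul_eq_mul] at this; linear_combination this
    rw [this]
    exact dvd_add (dvd_mul_right _ _) ((dvd_pow_self X (by omega)).mul_right d)
  · rintro ⟨c, rfl⟩
    exact ⟨Submodule.Quotient.mk c, by rw [← Submodule.Quotient.mk_smul, smul_eq_mul]⟩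

lemma mmod_exists_inv (i : ℕ) (f : Polynomial k) (hf : ¬ (X : Polynomial k) ∣ f) :
    ∃ g : Polynomial k,
      g • (Submodule.Quotient.mk f : Mmod k i) = Submodule.Quotient.mk 1 := by
  have hcop : IsCoprime ((X : Polynomial k) ^ i) f :=
    ((Polynomial.prime_X.irreducible.coprime_iff_not_dvd).mpr hf).pow_left
  obtain ⟨u, v, huv⟩ := hcop
  refine ⟨v, ?_⟩
  rw [← Submodule.Quotient.mk_smul, Submodule.Quotient.eq]
  refine Ideal.mem_span_singleton.mpr ⟨-u, ?_⟩
  rw [smul_eq_mul]; linear_combination huv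

lemma mmod_one_smul (x : Mmod k 1) : (X : Polynomial k) • x = 0 := by
  obtain ⟨f, rfl⟩ := Submodule.Quotient.mk_surjective _ x
  rw [← Submodule.Quotient.mk_smul, Submodule.Quotient.mk_eq_zero]
  exact Ideal.mem_span_singleton.mpr (by rw [pow_one, smul_eq_mul]; exact dvd_mul_right _ _)

lemma mmod_smul_eq_zero (p : ℕ) (hp : 2 ≤ p) (x : Mmod k p)
    (hx : (X : Polynomial k) • x = 0) : ∃ c : Mmod k p, x = (X : Polynomial k) • c := by
  obtain ⟨q, rfl⟩ : ∃ q, p = q + 2 := ⟨p - 2, by omega⟩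
  obtain ⟨f, rfl⟩ := Submodule.Quotient.mk_surjective _ x
  rw [← Submodule.Quotient.mk_smul, Submodule.Quotient.mk_eq_zero] at hx
  obtain ⟨d, hd⟩ := Ideal.mem_span_singleton.mp hx
  rw [smul_eq_mul] at hd
  refine ⟨Submodule.Quotient.mk (X ^ q * d), ?_⟩
  rw [← Submodule.Quotient.mk_smul]
  congr 1
  refine mul_left_cancel₀ Polynomial.X_ne_zero ?_
  rw [hd, smul_eq_mul]
  rw [pow_add]
  ring

lemma split_of_proj {P : Type} [AddCommGroup P] [Module (Polynomial k) P]
    (m : P) (i : ℕ) (hann : (X : Polynomial k) ^ i • m = 0)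
    (φ : P →ₗ[Polynomial k] Mmod k i) (g : Polynomial k)
    (hg : g • φ m = Submodule.Quotient.mk 1) :
    ∃ N : Submodule (Polynomial k) P, IsCompl (Submodule.span (Polynomial k) {m}) N := by
  have hle : (Ideal.span {(X : Polynomial k) ^ i} : Submodule (Polynomial k) (Polynomial k)) ≤
      LinearMap.ker (LinearMap.toSpanSingleton (Polynomial k) P m) := by
    rw [Ideal.span_le]
    rintro x hx
    rw [Set.mem_singleton_iff] at hx
    subst hx
    simpa [LinearMap.mem_ker, LinearMap.toSpanSingleton_apply] using hann
  set ψ : Mmod k i →ₗ[Polynomial k] P :=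
    Submodule.liftQ _ (LinearMap.toSpanSingleton (Polynomial k) P m) hle with hψ
  set π : P →ₗ[Polynomial k] P := ψ ∘ₗ (g • φ) with hπ
  have hπm : π m = m := by
    have : π m = ψ (g • φ m) := rfl
    rw [this, hg, hψ, Submodule.liftQ_apply, LinearMap.toSpanSingleton_apply, one_smul]
  have hmem : ∀ x, π x ∈ Submodule.span (Polynomial k) {m} := by
    intro x
    obtain ⟨h, hh⟩ := Submodule.Quotient.mk_surjective _ ((g • φ) x)
    have : π x = ψ ((g • φ) x) := rfl
    rw [this, ← hh, hψ, Submodule.liftQ_apply, LinearMap.toSpanSingleton_apply]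
    exact Submodule.mem_span_singleton.mpr ⟨h, rfl⟩
  have hidem : ∀ x, π (π x) = π x := by
    intro x
    obtain ⟨c, hc⟩ := Submodule.mem_span_singleton.mp (hmem x)
    rw [← hc, map_smul, hπm]
  refine ⟨LinearMap.ker π, ?_, ?_⟩
  · rw [Submodule.disjoint_def]
    intro x hx hker
    obtain ⟨c, rfl⟩ := Submodule.mem_span_singleton.mp hx
    have h0 : π (c • m) = 0 := LinearMap.mem_ker.mp hker
    rw [map_smul, hπm] at h0
    exact h0
  · rw [codisjoint_iff, Submodule.eq_top_iff']
    intro x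
    refine Submodule.mem_sup.mpr ⟨π x, hmem x, x - π x, ?_, by abel⟩
    rw [LinearMap.mem_ker, map_sub, hidem, sub_self]

end Aux6

open Aux6 in
/-- For a finitely generated permutation module `P ≅ (kC_p)^r ⊕ k^s` over
`R = k[T]/T^p`, a nonzero `m ∈ P` generates a direct summand iff
`dep (T m) = 1`, or `dep m = 0` and `T m = 0`. -/
theorem stmt6 (k : Type) [Field k] (p : ℕ) (hp : p.Prime) [CharP k p]
    (P : Type) [AddCommGroup P] [Module (Polynomial k) P]
    (hP : IsPermMod k p P) (m : P) (hm : m ≠ 0) :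
    (∃ N : Submodule (Polynomial k) P, IsCompl (Submodule.span (Polynomial k) {m}) N) ↔
      (HasDepth k 1 ((X : Polynomial k) • m) ∨
        (HasDepth k 0 m ∧ (X : Polynomial k) • m = 0)) := by
  obtain ⟨r, s, ⟨e⟩⟩ := hP
  have hXp : ∀ x : P, (X : Polynomial k) ^ p • x = 0 := by
    intro x
    apply e.injective
    rw [map_smul, map_zero]
    refine Prod.ext ?_ ?_
    · funext j
      show (X : Polynomial k) ^ p • (e x).1 j = _
      rw [mmod_xpow_smul k p p le_rfl]; rfl
    · funext j
      show (X : Polynomial k) ^ p • (e x).2 j = _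
      rw [mmod_xpow_smul k 1 p hp.one_lt.le]; rfl
  constructor
  · rintro ⟨N, hN⟩
    by_cases h2 : ∃ y : P, (X : Polynomial k) • m = (X : Polynomial k) ^ 2 • y
    · -- show X • m = 0, then right disjunct
      obtain ⟨y, hy⟩ := h2
      have hy' : y ∈ Submodule.span (Polynomial k) {m} ⊔ N := by
        rw [hN.sup_eq_top]; trivial
      obtain ⟨u, hu, n, hn, huv⟩ := Submodule.mem_sup.mp hy'
      obtain ⟨f, rfl⟩ := Submodule.mem_span_singleton.mp hu
      have key : (X : Polynomial k) • m - (X : Polynomial k) ^ 2 • (f • m) =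
          (X : Polynomial k) ^ 2 • n := by
        rw [hy, ← huv, smul_add]; abel
      have hz : (X : Polynomial k) • m - (X : Polynomial k) ^ 2 • (f • m) = 0 := by
        apply Submodule.disjoint_def.mp hN.disjoint
        · exact Submodule.sub_mem _
            (Submodule.smul_mem _ _ (Submodule.mem_span_singleton_self m))
            (Submodule.smul_mem _ _
              (Submodule.smul_mem _ _ (Submodule.mem_span_singleton_self m)))
        · rw [key]; exact Submodule.smul_mem _ _ hn
      have hsm : ((X : Polynomial k) ^ 2 * f - X) • m = 0 := by
        rw [sub_smul, mul_smul]
        rw [sub_eq_zero] at hz ⊢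
        exact hz.symm
      have h0 : (X : Polynomial k) • m = 0 := by
        have h1 := geom_sum_mul ((X : Polynomial k) * f) p
        have hgeo : (∑ i ∈ Finset.range p, ((X : Polynomial k) * f) ^ i) *
            ((X : Polynomial k) ^ 2 * f - X) = (X : Polynomial k) ^ (p + 1) * f ^ p - X := by
          linear_combination (X : Polynomial k) * h1
        have hz2 : ((X : Polynomial k) ^ (p + 1) * f ^ p - X) • m = 0 := by
          rw [← hgeo, mul_smul, hsm, smul_zero]
        have hz3 : ((X : Polynomial k) ^ (p + 1) * f ^ p) • m = 0 := by
          have hre : (X : Polynomial k) ^ (p + 1) * f ^ p = (X * f ^ p) * X ^ p := by ring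
          rw [hre, mul_smul, hXp m, smul_zero]
        rw [sub_smul, hz3, zero_sub, neg_eq_zero] at hz2
        exact hz2
      refine Or.inr ⟨⟨⟨m, by simp⟩, ?_⟩, h0⟩
      rintro ⟨y', hy'2⟩
      rw [zero_add, pow_one] at hy'2
      have hy'' : y' ∈ Submodule.span (Polynomial k) {m} ⊔ N := by
        rw [hN.sup_eq_top]; trivial
      obtain ⟨u', hu', n', hn', huv'⟩ := Submodule.mem_sup.mp hy''
      obtain ⟨f', rfl⟩ := Submodule.mem_span_singleton.mp hu'
      have hmn : m = (X : Polynomial k) • n' := by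
        rw [hy'2, ← huv', smul_add, smul_comm, h0, smul_zero, zero_add]
      exact hm (Submodule.disjoint_def.mp hN.disjoint m
        (Submodule.mem_span_singleton_self m)
        (hmn ▸ Submodule.smul_mem _ _ hn'))
    · refine Or.inl ⟨⟨m, by rw [pow_one]⟩, ?_⟩
      rintro ⟨y, hy⟩
      exact h2 ⟨y, by rw [hy]⟩
  · rintro (⟨-, h2⟩ | ⟨⟨-, h1⟩, hm0⟩)
    · -- ∃ j, (e m).1 j is not divisible by X
      have hj : ∃ j : Fin r, ¬ ∃ c : Mmod k p, (e m).1 j = (X : Polynomial k) • c := by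
        by_contra hall
        push_neg at hall
        choose c hc using hall
        apply h2
        refine ⟨e.symm (c, 0), ?_⟩
        apply e.injective
        rw [map_smul, map_smul, e.apply_symm_apply]
        refine Prod.ext ?_ ?_
        · funext j
          show (X : Polynomial k) • (e m).1 j = (X : Polynomial k) ^ (1 + 1) • c j
          rw [hc j, smul_smul, ← pow_two]
        · funext j
          show (X : Polynomial k) • (e m).2 j = (X : Polynomial k) ^ (1 + 1) • (0 : Mmod k 1)
          rw [smul_zero]
          exact mmod_one_smul k ((e m).2 j)
      obtain ⟨j, hj⟩ := hj
      obtain ⟨f, hf⟩ := Submodule.Quotient.mk_surjective _ ((e m).1 j)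
      have hfd : ¬ (X : Polynomial k) ∣ f := by
        intro hd
        obtain ⟨c, hc⟩ := (mmod_mk_eq_smul_iff k p hp.one_lt.le f).mpr hd
        exact hj ⟨c, by rw [← hf]; exact hc⟩
      obtain ⟨g, hg⟩ := mmod_exists_inv k p f hfd
      let φ : P →ₗ[Polynomial k] Mmod k p :=
        (LinearMap.proj j) ∘ₗ (LinearMap.fst (Polynomial k) _ _) ∘ₗ e.toLinearMap
      have hφm : g • φ m = Submodule.Quotient.mk 1 := by
        show g • (e m).1 j = _
        rw [← hf]; exact hg
      exact split_of_proj k m p (hXp m) φ g hφm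
    · rw [zero_add, pow_one] at h1
      have hj : ∃ j : Fin s, (e m).2 j ≠ 0 := by
        by_contra hall
        push_neg at hall
        have hXa : ∀ j, (X : Polynomial k) • (e m).1 j = 0 := by
          intro j
          have h0 : e ((X : Polynomial k) • m) = 0 := by rw [hm0, map_zero]
          rw [map_smul] at h0
          have := congrFun (congrArg Prod.fst h0) j
          exact this
        apply h1
        have hex : ∀ j, ∃ c : Mmod k p, (e m).1 j = (X : Polynomial k) • c := fun j =>
          mmod_smul_eq_zero k p hp.two_le ((e m).1 j) (hXa j)
        choose c hc using hex
        refine ⟨e.symm (c, 0), ?_⟩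
        apply e.injective
        rw [map_smul, e.apply_symm_apply]
        refine Prod.ext ?_ ?_
        · funext j
          show (e m).1 j = (X : Polynomial k) • c j
          exact hc j
        · funext j
          show (e m).2 j = (X : Polynomial k) • (0 : Mmod k 1)
          rw [smul_zero]; exact hall j
      obtain ⟨j, hj⟩ := hj
      obtain ⟨f, hf⟩ := Submodule.Quotient.mk_surjective _ ((e m).2 j)
      have hfd : ¬ (X : Polynomial k) ∣ f := by
        intro hd
        apply hj
        rw [← hf, Submodule.Quotient.mk_eq_zero]
        exact Ideal.mem_span_singleton.mpr (by rwa [pow_one])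
      obtain ⟨g, hg⟩ := mmod_exists_inv k 1 f hfd
      let φ : P →ₗ[Polynomial k] Mmod k 1 :=
        (LinearMap.proj j) ∘ₗ (LinearMap.snd (Polynomial k) _ _) ∘ₗ e.toLinearMap
      have hφm : g • φ m = Submodule.Quotient.mk 1 := by
        show g • (e m).2 j = _
        rw [← hf]; exact hg
      have hann : (X : Polynomial k) ^ 1 • m = 0 := by rwa [pow_one]
      exact split_of_proj k m 1 hann φ g hφm
end
end

section
/- Let P be a permutation kC_p-module and m ∈ P a nonzero element with Tm ≠ 0 and dep(Tm) = 1. Then T^{p-1} m ≠ 0, and ⟨m⟩ is a direct summand of P isomorphic to kC_p. -/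
/-!
Write `P ≅ R^r ⊕ k^s` with `R = k[T]/T^p`. As `T` kills `k`, if every `R`-coordinate of `m` lay
in `T R` then `T m ∈ T² P`; so some coordinate is not in `T R`, hence is a unit of `R`.
Projecting onto it and dividing by the unit gives `φ : P → R` with `φ m = 1`. As `T^p` kills
`m`, `φ` maps `⟨m⟩` isomorphically onto `R`, and `⟨m⟩ ⊕ ker φ = P`.
-/

open Polynomial

noncomputable section

namespace Mmod

variable {k : Type} [Field k] {i : ℕ}

lemma smul_mk (q f : Polynomial k) :
    q • (Ideal.Quotient.mk (Ideal.span {(X : Polynomial k) ^ i}) f : Mmod k i) =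
      Ideal.Quotient.mk _ (q * f) :=
  rfl

lemma smul_one (q : Polynomial k) :
    q • (1 : Mmod k i) = Ideal.Quotient.mk _ q := by
  rw [← map_one (Ideal.Quotient.mk _), smul_mk, mul_one]

lemma smul_eq_zero_of_dvd {q : Polynomial k} (hq : X ^ i ∣ q) (x : Mmod k i) : q • x = 0 := by
  obtain ⟨f, rfl⟩ := Ideal.Quotient.mk_surjective x
  rw [smul_mk, Ideal.Quotient.eq_zero_iff_mem, Ideal.mem_span_singleton]
  exact hq.mul_right f

lemma X_pow_smul_one_ne_zero {j : ℕ} (hj : j < i) :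
    (X : Polynomial k) ^ j • (1 : Mmod k i) ≠ 0 := by
  rw [smul_one, Ne, Ideal.Quotient.eq_zero_iff_mem, Ideal.mem_span_singleton, X_pow_dvd_iff]
  exact fun h => by simpa using h j hj

lemma isUnit_or_exists_eq_X_smul (x : Mmod k i) :
    IsUnit x ∨ ∃ c : Mmod k i, x = (X : Polynomial k) • c := by
  obtain ⟨f, rfl⟩ := Ideal.Quotient.mk_surjective x
  by_cases h0 : f.coeff 0 = 0
  · obtain ⟨g, rfl⟩ := X_dvd_iff.mpr h0
    exact Or.inr ⟨Ideal.Quotient.mk _ g, (smul_mk X g).symm⟩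
  left
  -- `f` is a nonzero constant plus a multiple of `X`, which is nilpotent in `k[X]/(X^i)`
  have hnil : IsNilpotent (Ideal.Quotient.mk (Ideal.span {(X : Polynomial k) ^ i})
      (f - C (f.coeff 0))) := by
    refine ⟨i, ?_⟩
    rw [← map_pow, Ideal.Quotient.eq_zero_iff_mem, Ideal.mem_span_singleton]
    exact pow_dvd_pow_of_dvd (X_dvd_iff.mpr (by simp)) i
  have hC : IsUnit (Ideal.Quotient.mk (Ideal.span {(X : Polynomial k) ^ i}) (C (f.coeff 0))) :=
    (isUnit_C.mpr (isUnit_iff_ne_zero.mpr h0)).map _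
  simpa using hnil.isUnit_add_left_of_commute hC (Commute.all _ _)

end Mmod

section CyclicSummand

variable {R M : Type*} [CommRing R] [AddCommGroup M] [Module R M] {I : Ideal R}
  (φ : M →ₗ[R] R ⧸ I) {m : M}

lemma apply_smul_of_apply_eq_one (hφ : φ m = 1) (r : R) :
    φ (r • m) = Ideal.Quotient.mk I r := by
  rw [map_smul, hφ, ← Algebra.algebraMap_eq_smul_one]
  rfl

lemma bijective_domRestrict_span_singleton (hφ : φ m = 1) (hI : ∀ r ∈ I, r • m = 0) :
    Function.Bijective (φ.domRestrict (R ∙ m)) := by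
  refine ⟨(injective_iff_map_eq_zero _).mpr ?_, fun x => ?_⟩
  · rintro ⟨x, hx⟩ hφx
    obtain ⟨r, rfl⟩ := Submodule.mem_span_singleton.mp hx
    rw [LinearMap.domRestrict_apply, apply_smul_of_apply_eq_one φ hφ,
      Ideal.Quotient.eq_zero_iff_mem] at hφx
    exact Subtype.ext (hI r hφx)
  · obtain ⟨r, rfl⟩ := Ideal.Quotient.mk_surjective x
    exact ⟨⟨r • m, Submodule.smul_mem _ r (Submodule.mem_span_singleton_self m)⟩,
      apply_smul_of_apply_eq_one φ hφ r⟩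

def spanSingletonEquivOfApplyEqOne (hφ : φ m = 1) (hI : ∀ r ∈ I, r • m = 0) :
    (R ∙ m) ≃ₗ[R] R ⧸ I :=
  LinearEquiv.ofBijective _ (bijective_domRestrict_span_singleton φ hφ hI)

lemma isCompl_span_singleton_ker_s7 (hφ : φ m = 1) (hI : ∀ r ∈ I, r • m = 0) :
    IsCompl (R ∙ m) (LinearMap.ker φ) := by
  set e := spanSingletonEquivOfApplyEqOne φ hφ hI
  have := LinearMap.isCompl_of_proj (f := e.symm.toLinearMap ∘ₗ φ) fun x =>
    e.symm_apply_apply x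
  rwa [LinearEquiv.ker_comp] at this

end CyclicSummand

abbrev PermModel (k : Type) [Field k] (p r s : ℕ) : Type :=
  (Fin r → Mmod k p) × (Fin s → Mmod k 1)

namespace PermModel

variable {k : Type} [Field k] {p r s : ℕ}

lemma smul_eq_zero {q : Polynomial k} (hp : X ^ p ∣ q) (h1 : X ∣ q) (y : PermModel k p r s) :
    q • y = 0 :=
  Prod.ext (funext fun _ => Mmod.smul_eq_zero_of_dvd hp _)
    (funext fun _ => Mmod.smul_eq_zero_of_dvd (by rwa [pow_one]) _)

lemma exists_isUnit_fst {y : PermModel k p r s}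
    (hy : ¬ ∃ z : PermModel k p r s, (X : Polynomial k) • y = (X : Polynomial k) ^ 2 • z) :
    ∃ i, IsUnit (y.1 i) := by
  by_contra! h
  choose c hc using fun i => (Mmod.isUnit_or_exists_eq_X_smul (y.1 i)).resolve_left (h i)
  refine hy ⟨(c, 0), Prod.ext (funext fun i => ?_) (funext fun j => ?_)⟩
  · simp only [Prod.smul_fst, Pi.smul_apply, hc i, pow_two, mul_smul]
  · simpa using Mmod.smul_eq_zero_of_dvd (pow_one (X : Polynomial k)).dvd (y.2 j)

end PermModel

theorem stmt7_general (k : Type) [Field k] (p : ℕ)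
    (P : Type) [AddCommGroup P] [Module (Polynomial k) P]
    (hP : IsPermMod k p P) (m : P)
    (hTm : (X : Polynomial k) • m ≠ 0) (hdep : HasDepth k 1 ((X : Polynomial k) • m)) :
    (X : Polynomial k) ^ (p - 1) • m ≠ 0 ∧
      (∃ N : Submodule (Polynomial k) P, IsCompl (Submodule.span (Polynomial k) {m}) N) ∧
        Nonempty ((Submodule.span (Polynomial k) {m}) ≃ₗ[Polynomial k] Mmod k p) := by
  obtain ⟨r, s, ⟨e⟩⟩ := hP
  have hsmul (q : Polynomial k) (hp : X ^ p ∣ q) (h1 : X ∣ q) : q • m = 0 :=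
    e.map_eq_zero_iff.mp (by rw [map_smul]; exact PermModel.smul_eq_zero hp h1 _)
  have hp : p ≠ 0 := by
    rintro rfl
    exact hTm (hsmul X (by simp) dvd_rfl)
  have hI : ∀ q ∈ Ideal.span {(X : Polynomial k) ^ p}, q • m = 0 := fun q hq =>
    have hpq := Ideal.mem_span_singleton.mp hq
    hsmul q hpq ((dvd_pow_self X hp).trans hpq)
  obtain ⟨i, hi⟩ := PermModel.exists_isUnit_fst (y := e m) fun ⟨z, hz⟩ =>
    hdep.2 ⟨e.symm z, e.injective (by rw [map_smul, map_smul, e.apply_symm_apply, hz])⟩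
  let φ : P →ₗ[Polynomial k] Mmod k p :=
    LinearMap.mulLeft (Polynomial k) (↑hi.unit⁻¹ : Mmod k p) ∘ₗ LinearMap.proj i ∘ₗ
      LinearMap.fst _ _ _ ∘ₗ e.toLinearMap
  have hφ : φ m = 1 := hi.val_inv_mul
  refine ⟨fun h => ?_, ⟨_, isCompl_span_singleton_ker_s7 φ hφ hI⟩,
    ⟨spanSingletonEquivOfApplyEqOne φ hφ hI⟩⟩
  refine Mmod.X_pow_smul_one_ne_zero (k := k) (Nat.sub_lt (Nat.pos_of_ne_zero hp) one_pos) ?_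
  rw [← hφ, ← map_smul, h, map_zero]

/-- Let `P` be a permutation `kC_p`-module and `m ∈ P` nonzero with `T m ≠ 0` and
`dep (T m) = 1`. Then `T^{p-1} m ≠ 0` and `⟨m⟩` is a direct summand of `P`
isomorphic to `kC_p = k[T]/T^p`. -/
theorem stmt7 (k : Type) [Field k] (p : ℕ) (hp : p.Prime) [CharP k p]
    (P : Type) [AddCommGroup P] [Module (Polynomial k) P]
    (hP : IsPermMod k p P) (m : P) (hm : m ≠ 0)
    (hTm : (X : Polynomial k) • m ≠ 0) (hdep : HasDepth k 1 ((X : Polynomial k) • m)) :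
    (X : Polynomial k) ^ (p - 1) • m ≠ 0 ∧
      (∃ N : Submodule (Polynomial k) P, IsCompl (Submodule.span (Polynomial k) {m}) N) ∧
        Nonempty ((Submodule.span (Polynomial k) {m}) ≃ₗ[Polynomial k] Mmod k p) :=
  stmt7_general k p P hP m hTm hdep
end
end

section
/- The p-distance function size: {1,...,p} → ℕ, defined by size(1) = size(p) = 0 and size(x) = min(size(p-x), size(p-x+1)) + 1 for 2 ≤ x ≤ p-1, is well-defined (the recursion terminates). -/
open Polynomial

noncomputable section

/-- The `p`-distance function `size` on `{1, …, p}`, with `size 1 = size p = 0` and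
`size x = min (size (p-x)) (size (p-x+1)) + 1` for `2 ≤ x ≤ p-1`, is well-defined:
a function satisfying the recursion exists. -/
theorem stmt8 (p : ℕ) (hp : 2 ≤ p) : ∃ f : ℕ → ℕ, IsSizeFun p f := by
  refine ⟨fun x => min (2*(x-1)) (2*(p-x)-1), ?_, ?_, ?_⟩ <;> simp only
  · omega
  · omega
  · intro x h2 hx; omega
end
end

section
/- For the p-distance function size on {1,...,p}, one has size((p+1)/2) = p - 2, and size(x) ≤ p - 2 for all x in {1,...,p}. -/
open Polynomial

noncomputable section

lemma size_lower (p : ℕ) (f : ℕ → ℕ) (hp3 : 3 ≤ p) (hf : IsSizeFun p f) :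
    ∀ n x, 1 ≤ x → x ≤ p → f x ≤ n → min (2 * (x - 1)) (2 * (p - x) - 1) ≤ f x := by
  obtain ⟨h1, hp0, hrec⟩ := hf
  intro n
  induction n with
  | zero =>
    intro x hx1 hxp hfx
    rcases eq_or_ne x 1 with rfl | hne1
    · omega
    rcases eq_or_ne x p with rfl | hnep
    · omega
    · have hx := hrec x (by omega) (by omega)
      omega
  | succ n ih =>
    intro x hx1 hxp hfx
    rcases eq_or_ne x 1 with rfl | hne1
    · omega
    rcases eq_or_ne x p with rfl | hnep
    · omega
    have hx := hrec x (by omega) (by omega)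
    rcases le_total (f (p - x)) (f (p - x + 1)) with h | h
    · have hi := ih (p - x) (by omega) (by omega) (by omega)
      omega
    · have hi := ih (p - x + 1) (by omega) (by omega) (by omega)
      omega

lemma size_upper (p : ℕ) (f : ℕ → ℕ) (hp3 : 3 ≤ p) (hf : IsSizeFun p f) :
    ∀ n x, 1 ≤ x → x ≤ p → min (2 * (x - 1)) (2 * (p - x) - 1) ≤ n →
      f x ≤ min (2 * (x - 1)) (2 * (p - x) - 1) := by
  obtain ⟨h1, hp0, hrec⟩ := hf
  intro n
  induction n with
  | zero =>
    intro x hx1 hxp hL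
    have : x = 1 ∨ x = p := by omega
    rcases this with rfl | rfl <;> omega
  | succ n ih =>
    intro x hx1 hxp hL
    rcases eq_or_ne x 1 with rfl | hne1
    · omega
    rcases eq_or_ne x p with rfl | hnep
    · omega
    have hx := hrec x (by omega) (by omega)
    rcases le_or_gt (2 * x) p with h | h
    · have hi := ih (p - x + 1) (by omega) (by omega) (by omega)
      omega
    · have hi := ih (p - x) (by omega) (by omega) (by omega)
      omega

/-- For an odd prime `p`, the `p`-distance satisfies `size ((p+1)/2) = p - 2` and
`size x ≤ p - 2` for all `x ∈ {1, …, p}`. -/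
theorem stmt9 (p : ℕ) (hp : p.Prime) (hodd : Odd p) (f : ℕ → ℕ) (hf : IsSizeFun p f) :
    f ((p + 1) / 2) = p - 2 ∧ ∀ x, 1 ≤ x → x ≤ p → f x ≤ p - 2 := by
  obtain ⟨k, hk⟩ := hodd
  have hp2 : p ≠ 2 := by omega
  have hp3 : 3 ≤ p := by have := hp.two_le; omega
  constructor
  · have hl := size_lower p f hp3 hf (f ((p + 1) / 2)) ((p + 1) / 2)
      (by omega) (by omega) le_rfl
    have hu := size_upper p f hp3 hf
      (min (2 * ((p + 1) / 2 - 1)) (2 * (p - (p + 1) / 2) - 1)) ((p + 1) / 2)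
      (by omega) (by omega) le_rfl
    omega
  · intro x hx1 hxp
    have hu := size_upper p f hp3 hf
      (min (2 * (x - 1)) (2 * (p - x) - 1)) x hx1 hxp le_rfl
    omega
end
end

section
/- For the p-distance function, the values along the sequence 1, p-1, 2, p-2, 3, ..., (p-1)/2, (p+1)/2 are strictly increasing from the second term on; explicitly, for 1 ≤ j ≤ (p-1)/2, size(j) = 2(j-1) and size(p-j) = 2j - 1. -/
open Polynomial

noncomputable section

lemma sizeLB (p k : ℕ) (f : ℕ → ℕ) (hf : IsSizeFun p f) (hk : 1 ≤ k) (hpk : p = 2 * k + 1) :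
    ∀ n j, 1 ≤ j → j ≤ k → min n (2 * (j - 1)) ≤ f j ∧ min n (2 * j - 1) ≤ f (p - j) := by
  obtain ⟨h1, hp0, hrec⟩ := hf
  intro n
  induction n with
  | zero => intro j hj1 hjk; omega
  | succ n ih =>
    intro j hj1 hjk
    have hfst : min (n + 1) (2 * (j - 1)) ≤ f j := by
      rcases Nat.eq_or_lt_of_le hj1 with h | h
      · rw [← h, h1]; omega
      · -- 2 ≤ j
        have hrj : f j = min (f (p - j)) (f (p - j + 1)) + 1 := hrec j h (by omega)
        have i1 := (ih j hj1 hjk).2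
        have i2 := (ih (j - 1) (by omega) (by omega)).2
        have e : p - (j - 1) = p - j + 1 := by omega
        rw [e] at i2
        omega
    refine ⟨hfst, ?_⟩
    have hrpj : f (p - j) = min (f (p - (p - j))) (f (p - (p - j) + 1)) + 1 :=
      hrec (p - j) (by omega) (by omega)
    have e1 : p - (p - j) = j := by omega
    rw [e1] at hrpj
    rcases Nat.eq_or_lt_of_le hjk with h | h
    · -- j = k, so j + 1 = p - j
      have e2 : j + 1 = p - j := by omega
      rw [e2] at hrpj
      omega
    · have i3 := (ih (j + 1) (by omega) (by omega)).1
      have : j + 1 - 1 = j := by omega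
      rw [this] at i3
      omega

/-- For an odd prime `p`, along the sequence `1, p-1, 2, p-2, …, (p-1)/2, (p+1)/2`
the `p`-distance strictly increases: for `1 ≤ j ≤ (p-1)/2` one has
`size j = 2(j-1)` and `size (p-j) = 2j - 1`. -/
theorem stmt10 (p : ℕ) (hp : p.Prime) (hodd : Odd p) (f : ℕ → ℕ) (hf : IsSizeFun p f) :
    ∀ j, 1 ≤ j → j ≤ (p - 1) / 2 → f j = 2 * (j - 1) ∧ f (p - j) = 2 * j - 1 := by
  
  obtain ⟨k, hpk⟩ := hodd
  have hp3 : 3 ≤ p := by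
    have := hp.two_le; omega
  have hk1 : 1 ≤ k := by omega
  have hke : (p - 1) / 2 = k := by
    subst hpk; omega
  rw [hke]
  obtain ⟨h1, hp0, hrec⟩ := hf
  have hf' : IsSizeFun p f := ⟨h1, hp0, hrec⟩
  intro j hj1
  induction j, hj1 using Nat.le_induction with
  | base =>
    intro hjk
    refine ⟨by rw [h1], ?_⟩
    have hr : f (p - 1) = min (f (p - (p - 1))) (f (p - (p - 1) + 1)) + 1 :=
      hrec (p - 1) (by omega) (by omega)
    have e : p - (p - 1) = 1 := by omega
    rw [e, h1] at hr
    omega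
  | succ j hj ih =>
    intro hjk
    obtain ⟨ihj, ihpj⟩ := ih (by omega)
    have hr1 : f (j + 1) = min (f (p - (j + 1))) (f (p - (j + 1) + 1)) + 1 :=
      hrec (j + 1) (by omega) (by omega)
    have e1 : p - (j + 1) + 1 = p - j := by omega
    rw [e1, ihpj] at hr1
    have lb1 := (sizeLB p k f hf' hk1 hpk (2 * (j + 1)) (j + 1) (by omega) hjk).2
    have hfj1 : f (j + 1) = 2 * ((j + 1) - 1) := by omega
    refine ⟨hfj1, ?_⟩
    have hr2 : f (p - (j + 1)) = min (f (p - (p - (j + 1)))) (f (p - (p - (j + 1)) + 1)) + 1 :=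
      hrec (p - (j + 1)) (by omega) (by omega)
    have e2 : p - (p - (j + 1)) = j + 1 := by omega
    rw [e2, hfj1] at hr2
    rcases Nat.eq_or_lt_of_le hjk with h | h
    · -- j + 1 = k, j + 2 = p - (j+1)
      have e3 : j + 1 + 1 = p - (j + 1) := by omega
      rw [e3] at hr2
      omega
    · have lb2 := (sizeLB p k f hf' hk1 hpk (2 * (j + 2)) (j + 2) (by omega) (by omega)).1
      have : j + 1 + 1 = j + 2 := rfl
      rw [this] at hr2
      omega
end
end

section
/- For 2 ≤ x ≤ p-1, writing x = p + ε - x' with ε ∈ {0,1} chosen so that size(x') = size(x) - 1, there is a short exact sequence of kC_p-modules 0 → M_{x'} → P → M_x → 0 where P = M_p if ε = 0 and P = M_p ⊕ M_1 if ε = 1; in both cases P is a permutation module. -/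
open Polynomial

noncomputable section

/-!
Both sequences are instances of a statement about a regular element `r` of a commutative
ring `R`: multiplication by `r` embeds `R ⧸ (s)` into `R ⧸ (r s)` with cokernel `R ⧸ (r)`,
and, for `u ∣ s`, the map `f ↦ (r f, -f)` embeds `R ⧸ (s)` into `R ⧸ (r s) × R ⧸ (u)` with
cokernel `R ⧸ (r u)`, via `(a, v) ↦ a + r v`. For `R = k[T]` take `r = T^x`, `s = T^{x'}`
when `ε = 0`, and `r = T^{x-1}`, `s = T^{x'}`, `u = T` when `ε = 1`.
-/

open Submodule

section QuotientSpanSingleton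

variable {R : Type*} [CommRing R]

def quotSpanMulLeft (r : R) {a b : R} (h : b ∣ r * a) :
    R ⧸ Ideal.span {a} →ₗ[R] R ⧸ Ideal.span {b} :=
  mapQ _ _ (LinearMap.mulLeft R r) fun y hy => by
    obtain ⟨c, rfl⟩ := Ideal.mem_span_singleton.mp hy
    rw [mem_comap, LinearMap.mulLeft_apply, ← mul_assoc]
    exact Ideal.mem_span_singleton.mpr (h.mul_right c)

theorem quotSpanMulLeft_mk (r : R) {a b : R} (h : b ∣ r * a) (y : R) :
    quotSpanMulLeft r h (Submodule.Quotient.mk y) = Submodule.Quotient.mk (r * y) :=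
  mapQ_apply _ _ _ y

theorem quotSpan_mk_eq_zero {a y : R} :
    (Submodule.Quotient.mk y : R ⧸ Ideal.span {a}) = 0 ↔ a ∣ y := by
  rw [Submodule.Quotient.mk_eq_zero, Ideal.mem_span_singleton]

theorem quotSpan_mk_eq_mk {a y z : R} :
    (Submodule.Quotient.mk y : R ⧸ Ideal.span {a}) = Submodule.Quotient.mk z ↔ a ∣ y - z := by
  rw [Submodule.Quotient.eq, Ideal.mem_span_singleton]

theorem quotSpan_factor_mk {a b : R} (H : Ideal.span {a} ≤ Ideal.span {b}) (y : R) :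
    factor H (Submodule.Quotient.mk y) = Submodule.Quotient.mk y :=
  factor_mk H y

variable {r s m : R}

theorem quotSpanMulLeft_injective (hr : IsLeftRegular r) (hm : r * s = m) :
    Function.Injective (quotSpanMulLeft r (a := s) hm.symm.dvd) := by
  rw [← LinearMap.ker_eq_bot, eq_bot_iff]
  intro y hy
  obtain ⟨y, rfl⟩ := Submodule.Quotient.mk_surjective _ y
  rw [LinearMap.mem_ker, quotSpanMulLeft_mk, quotSpan_mk_eq_zero, ← hm] at hy
  obtain ⟨c, hc⟩ := hy
  rw [mem_bot, quotSpan_mk_eq_zero]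
  exact ⟨c, hr (show r * y = r * (s * c) by rw [hc, mul_assoc])⟩

theorem range_quotSpanMulLeft_eq_ker_factor (hm : r * s = m) :
    LinearMap.range (quotSpanMulLeft r (a := s) hm.symm.dvd) =
      LinearMap.ker (factor (Ideal.span_singleton_le_span_singleton.mpr ⟨s, hm.symm⟩)) := by
  ext y
  obtain ⟨y, rfl⟩ := Submodule.Quotient.mk_surjective _ y
  rw [LinearMap.mem_range, LinearMap.mem_ker, quotSpan_factor_mk, quotSpan_mk_eq_zero]
  constructor
  · rintro ⟨z, hz⟩
    obtain ⟨z, rfl⟩ := Submodule.Quotient.mk_surjective _ z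
    rw [quotSpanMulLeft_mk, quotSpan_mk_eq_mk, ← hm] at hz
    obtain ⟨c, hc⟩ := hz
    exact ⟨z - s * c, by linear_combination -hc⟩
  · rintro ⟨z, rfl⟩
    exact ⟨Submodule.Quotient.mk z, quotSpanMulLeft_mk _ _ z⟩

theorem exists_shortExact_quotSpan (hr : IsLeftRegular r) (hm : r * s = m) :
    ∃ (g : R ⧸ Ideal.span {s} →ₗ[R] R ⧸ Ideal.span {m})
      (h : R ⧸ Ideal.span {m} →ₗ[R] R ⧸ Ideal.span {r}),
      Function.Injective g ∧ Function.Surjective h ∧ LinearMap.range g = LinearMap.ker h :=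
  ⟨_, _, quotSpanMulLeft_injective hr hm, factor_surjective _,
    range_quotSpanMulLeft_eq_ker_factor hm⟩

theorem exists_shortExact_quotSpan_prod {u n : R} (hr : IsLeftRegular r) (hm : r * s = m)
    (hn : r * u = n) (hus : u ∣ s) :
    ∃ (g : R ⧸ Ideal.span {s} →ₗ[R] (R ⧸ Ideal.span {m}) × R ⧸ Ideal.span {u})
      (h : (R ⧸ Ideal.span {m}) × R ⧸ Ideal.span {u} →ₗ[R] R ⧸ Ideal.span {n}),
      Function.Injective g ∧ Function.Surjective h ∧ LinearMap.range g = LinearMap.ker h := by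
  have hnm : n ∣ m := hn ▸ hm ▸ mul_dvd_mul_left r hus
  refine ⟨(quotSpanMulLeft r (a := s) hm.symm.dvd).prod
      (-factor (Ideal.span_singleton_le_span_singleton.mpr hus)),
    (factor (Ideal.span_singleton_le_span_singleton.mpr hnm)).coprod
      (quotSpanMulLeft r (a := u) hn.symm.dvd), ?_, ?_, ?_⟩
  · exact fun y z hyz => quotSpanMulLeft_injective hr hm (congrArg Prod.fst hyz)
  · intro y
    obtain ⟨y, rfl⟩ := Submodule.Quotient.mk_surjective _ y
    exact ⟨(Submodule.Quotient.mk y, 0), by simp⟩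
  · ext ⟨a, v⟩
    obtain ⟨a, rfl⟩ := Submodule.Quotient.mk_surjective _ a
    obtain ⟨v, rfl⟩ := Submodule.Quotient.mk_surjective _ v
    rw [LinearMap.mem_range, LinearMap.mem_ker, LinearMap.coprod_apply, quotSpan_factor_mk,
      quotSpanMulLeft_mk, ← Submodule.Quotient.mk_add, quotSpan_mk_eq_zero]
    constructor
    · rintro ⟨y, hy⟩
      obtain ⟨y, rfl⟩ := Submodule.Quotient.mk_surjective _ y
      simp only [LinearMap.prod_apply, Function.prod_apply, LinearMap.neg_apply, quotSpan_factor_mk,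
        quotSpanMulLeft_mk, ← Submodule.Quotient.mk_neg, Prod.mk.injEq, quotSpan_mk_eq_mk] at hy
      obtain ⟨⟨c, hc⟩, ⟨d, hd⟩⟩ := hy
      obtain ⟨e, rfl⟩ := hus
      refine ⟨-d - e * c, ?_⟩
      rw [← hn]
      linear_combination -hc - r * hd + c * hm
    · rintro ⟨c, hc⟩
      -- the kernel condition `a + r v = r u c` writes `a` as `r (u c - v)`
      refine ⟨Submodule.Quotient.mk (u * c - v), ?_⟩
      simp only [LinearMap.prod_apply, Function.prod_apply, LinearMap.neg_apply, quotSpan_factor_mk,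
        quotSpanMulLeft_mk, ← Submodule.Quotient.mk_neg, Prod.mk.injEq, quotSpan_mk_eq_mk]
      exact ⟨⟨0, by rw [← hn] at hc; linear_combination -hc⟩, ⟨-c, by ring⟩⟩

end QuotientSpanSingleton

theorem isPermMod_Mmod_self (k : Type) [Field k] (p : ℕ) : IsPermMod k p (Mmod k p) :=
  ⟨1, 0, ⟨(LinearEquiv.funUnique (Fin 1) _ _).symm.trans LinearEquiv.prodUnique.symm⟩⟩

theorem isPermMod_Mmod_self_prod_Mmod_one (k : Type) [Field k] (p : ℕ) :
    IsPermMod k p (Mmod k p × Mmod k 1) :=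
  ⟨1, 1, ⟨(LinearEquiv.funUnique (Fin 1) _ _).symm.prodCongr
    (LinearEquiv.funUnique (Fin 1) _ _).symm⟩⟩

theorem stmt12_general (k : Type) [Field k] (p : ℕ)
    (x x' ε : ℕ) (hx2 : 2 ≤ x) (hxp : x ≤ p - 1)
    (hxx' : x + x' = p + ε) :
    ((ε = 0 → ∃ (g : Mmod k x' →ₗ[Polynomial k] Mmod k p)
        (h : Mmod k p →ₗ[Polynomial k] Mmod k x),
        Function.Injective g ∧ Function.Surjective h ∧
          LinearMap.range g = LinearMap.ker h) ∧
      (ε = 1 → ∃ (g : Mmod k x' →ₗ[Polynomial k] (Mmod k p × Mmod k 1))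
        (h : (Mmod k p × Mmod k 1) →ₗ[Polynomial k] Mmod k x),
        Function.Injective g ∧ Function.Surjective h ∧
          LinearMap.range g = LinearMap.ker h)) ∧
      IsPermMod k p (Mmod k p) ∧ IsPermMod k p (Mmod k p × Mmod k 1) := by
  refine ⟨⟨?_, ?_⟩, isPermMod_Mmod_self k p, isPermMod_Mmod_self_prod_Mmod_one k p⟩
  · rintro rfl
    exact exists_shortExact_quotSpan (isRegular_X_pow x).left (by rw [← pow_add, hxx', add_zero])
  · rintro rfl
    exact exists_shortExact_quotSpan_prod (isRegular_X_pow (x - 1)).left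
      (by rw [← pow_add]; congr 1; omega) (by rw [← pow_add]; congr 1; omega)
      (pow_dvd_pow X (by omega))

/-- For `2 ≤ x ≤ p-1`, writing `x = p + ε - x'` with `ε ∈ {0,1}` chosen so that
`size x' = size x - 1`, there is a short exact sequence
`0 → M_{x'} → P → M_x → 0` with `P = M_p` if `ε = 0` and `P = M_p ⊕ M_1` if
`ε = 1`; in both cases `P` is a permutation module. -/
theorem stmt12 (k : Type) [Field k] (p : ℕ) (hp : p.Prime) [CharP k p]
    (x x' ε : ℕ) (hx2 : 2 ≤ x) (hxp : x ≤ p - 1)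
    (hε : ε = 0 ∨ ε = 1) (hxx' : x + x' = p + ε)
    (f : ℕ → ℕ) (hf : IsSizeFun p f) (hsize : f x' + 1 = f x) :
    ((ε = 0 → ∃ (g : Mmod k x' →ₗ[Polynomial k] Mmod k p)
        (h : Mmod k p →ₗ[Polynomial k] Mmod k x),
        Function.Injective g ∧ Function.Surjective h ∧
          LinearMap.range g = LinearMap.ker h) ∧
      (ε = 1 → ∃ (g : Mmod k x' →ₗ[Polynomial k] (Mmod k p × Mmod k 1))
        (h : (Mmod k p × Mmod k 1) →ₗ[Polynomial k] Mmod k x),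
        Function.Injective g ∧ Function.Surjective h ∧
          LinearMap.range g = LinearMap.ker h)) ∧
      IsPermMod k p (Mmod k p) ∧ IsPermMod k p (Mmod k p × Mmod k 1) :=
  stmt12_general k p x x' ε hx2 hxp hxx'
end
end

section
/- For every finitely generated kC_p-module M, ppdim(M) = size(M). -/
open Polynomial

noncomputable section

/-!
Upper bound: the exact sequences `0 → M_{p-c} → M_p → M_c → 0` and
`0 → M_{p-c+1} → M_p ⊕ M_1 → M_c → 0` have permutation middle terms, so splicing along the
recursion defining `size` resolves `M_c` in length `size c`; resolutions of the summands add up.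

Lower bound: call `m ∈ N` a block generator of size `t` if `T^t m = 0` but `T^(t-1) m ∉ T^t N`.
Permutation modules have no blocks of size `2 ≤ t ≤ p - 1`, and if `P ↠ N` with `P` a permutation
module and `N` has a block of size `t`, then the kernel has a block of size `p - t` or
`p - t + 1`. Following a resolution of length `s`, this gives `size t ≤ s`.
-/

theorem pow_smul_eq_zero_of_le {R M : Type*} [Monoid R] [AddMonoid M] [DistribMulAction R M]
    {x : R} {m : M} {a b : ℕ} (hab : a ≤ b) (h : x ^ a • m = 0) : x ^ b • m = 0 := by
  rw [← Nat.sub_add_cancel hab, pow_add, mul_smul, h, smul_zero]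

variable {k : Type} [Field k]

local notation "T" => (X : Polynomial k)

namespace Mmod

theorem smul_mk_s14 {a : ℕ} (r g : k[X]) :
    r • (Submodule.Quotient.mk g : Mmod k a) = Submodule.Quotient.mk (r * g) := by
  rw [← Submodule.Quotient.mk_smul, smul_eq_mul]

theorem mk_eq_zero_iff {a : ℕ} (g : k[X]) :
    (Submodule.Quotient.mk g : Mmod k a) = 0 ↔ T ^ a ∣ g := by
  rw [Submodule.Quotient.mk_eq_zero, Ideal.mem_span_singleton]

theorem pow_smul_eq_zero {a b : ℕ} (h : a ≤ b) (y : Mmod k a) : T ^ b • y = 0 := by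
  obtain ⟨g, rfl⟩ := Submodule.Quotient.mk_surjective _ y
  rw [smul_mk_s14, mk_eq_zero_iff]
  exact (pow_dvd_pow X h).mul_right g

theorem exists_eq_pow_smul_of_pow_smul_eq_zero {a t : ℕ} (h : t ≤ a) {y : Mmod k a}
    (hy : T ^ t • y = 0) : ∃ v : Mmod k a, y = T ^ (a - t) • v := by
  obtain ⟨g, rfl⟩ := Submodule.Quotient.mk_surjective _ y
  rw [smul_mk_s14, mk_eq_zero_iff] at hy
  obtain ⟨g', hg'⟩ := hy
  refine ⟨Submodule.Quotient.mk g', ?_⟩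
  rw [smul_mk_s14]
  congr 1
  apply mul_left_cancel₀ (pow_ne_zero t (X_ne_zero (R := k)))
  rw [hg', ← mul_assoc, ← pow_add, Nat.add_sub_cancel' h]

theorem mk_eq_mk_iff {a : ℕ} (g g' : k[X]) :
    (Submodule.Quotient.mk g : Mmod k a) = Submodule.Quotient.mk g' ↔ T ^ a ∣ g - g' := by
  rw [Submodule.Quotient.eq, Ideal.mem_span_singleton]

end Mmod

namespace IsPermMod

theorem of_linearEquiv {p : ℕ} {A B : Type} [AddCommGroup A] [Module k[X] A]
    [AddCommGroup B] [Module k[X] B] (e : A ≃ₗ[k[X]] B) (h : IsPermMod k p A) :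
    IsPermMod k p B := by
  obtain ⟨r, s, ⟨g⟩⟩ := h
  exact ⟨r, s, ⟨e.symm.trans g⟩⟩

theorem of_subsingleton (p : ℕ) (A : Type) [AddCommGroup A] [Module k[X] A]
    [Subsingleton A] : IsPermMod k p A :=
  ⟨0, 0, ⟨LinearEquiv.ofSubsingleton _ _⟩⟩

theorem prod {p : ℕ} {A B : Type} [AddCommGroup A] [Module k[X] A]
    [AddCommGroup B] [Module k[X] B] (hA : IsPermMod k p A) (hB : IsPermMod k p B) :
    IsPermMod k p (A × B) := by
  obtain ⟨r₁, s₁, ⟨gA⟩⟩ := hA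
  obtain ⟨r₂, s₂, ⟨gB⟩⟩ := hB
  let sumFin (m₁ m₂ : ℕ) (V : Type) [AddCommGroup V] [Module k[X] V] :
      ((Fin m₁ → V) × (Fin m₂ → V)) ≃ₗ[k[X]] (Fin (m₁ + m₂) → V) :=
    (LinearEquiv.sumArrowLequivProdArrow _ _ k[X] V).symm.trans
      (LinearEquiv.funCongrLeft k[X] V finSumFinEquiv.symm)
  exact ⟨r₁ + r₂, s₁ + s₂, ⟨(gA.prodCongr gB).trans <|
    (LinearEquiv.prodProdProdComm k[X] _ _ _ _).trans <|
      (sumFin r₁ r₂ (Mmod k p)).prodCongr (sumFin s₁ s₂ (Mmod k 1))⟩⟩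

variable {p : ℕ} {P : Type} [AddCommGroup P] [Module k[X] P]

theorem pow_smul_eq_zero (hP : IsPermMod k p P) (hp : p ≠ 0) (v : P) : T ^ p • v = 0 := by
  obtain ⟨r, s, ⟨g⟩⟩ := hP
  apply g.injective
  rw [map_smul, map_zero]
  ext i
  · exact Mmod.pow_smul_eq_zero le_rfl _
  · exact Mmod.pow_smul_eq_zero (Nat.one_le_iff_ne_zero.mpr hp) _

/-- In `M_p` the kernel of `T^j` is `T^(p-j) M_p`, and `M_1` is killed by `T`. -/
theorem exists_of_pow_smul_eq_zero (hP : IsPermMod k p P) {j : ℕ} (hj : j ≤ p) {v : P}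
    (hv : T ^ j • v = 0) : ∃ b ξ : P, v = T ^ (p - j) • b + ξ ∧ T • ξ = 0 := by
  obtain ⟨r, s, ⟨g⟩⟩ := hP
  have hfree (i : Fin r) : ∃ b : Mmod k p, (g v).1 i = T ^ (p - j) • b := by
    refine Mmod.exists_eq_pow_smul_of_pow_smul_eq_zero hj ?_
    simpa using congr_arg (fun w => w.1 i) (congr_arg g hv)
  choose b hb using hfree
  refine ⟨g.symm (b, 0), g.symm (0, (g v).2), g.injective ?_, g.injective ?_⟩
  · ext i
    · simp [hb]
    · simp
  · ext i
    · simp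
    · simpa using Mmod.pow_smul_eq_zero (le_refl 1) ((g v).2 i)

end IsPermMod

theorem isPermMod_mmod_self (p : ℕ) : IsPermMod k p (Mmod k p) :=
  ⟨1, 0, ⟨(LinearEquiv.funUnique (Fin 1) k[X] (Mmod k p)).symm.trans
    LinearEquiv.prodUnique.symm⟩⟩

theorem isPermMod_mmod_one (p : ℕ) : IsPermMod k p (Mmod k 1) :=
  ⟨0, 1, ⟨(LinearEquiv.funUnique (Fin 1) k[X] (Mmod k 1)).symm.trans
    ((LinearEquiv.prodComm k[X] _ _).trans LinearEquiv.prodUnique).symm⟩⟩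

def Submodule.prodLinearEquivProd {R A B : Type*} [Ring R] [AddCommGroup A] [Module R A]
    [AddCommGroup B] [Module R B] (q : Submodule R A) (q' : Submodule R B) :
    q.prod q' ≃ₗ[R] q × q' where
  toFun x := (⟨x.1.1, x.2.1⟩, ⟨x.1.2, x.2.2⟩)
  invFun y := ⟨(y.1.1, y.2.1), ⟨y.1.2, y.2.2⟩⟩
  map_add' _ _ := rfl
  map_smul' _ _ := rfl
  left_inv _ := rfl
  right_inv _ := rfl

namespace HasPermRes

variable {p : ℕ}

theorem of_linearEquiv : ∀ {s : ℕ} {A B : Type} [AddCommGroup A] [Module k[X] A]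
    [AddCommGroup B] [Module k[X] B], (A ≃ₗ[k[X]] B) → HasPermRes k p s A → HasPermRes k p s B
  | 0, _, _, _, _, _, _, e, h => IsPermMod.of_linearEquiv e h
  | _ + 1, _, _, _, _, _, _, e, ⟨P, _, _, π, hP, hπ, hK⟩ => by
    refine ⟨P, _, _, e.toLinearMap ∘ₗ π, hP, e.surjective.comp hπ, ?_⟩
    rwa [LinearMap.ker_comp, LinearEquiv.ker, Submodule.comap_bot]

theorem succ : ∀ {s : ℕ} {A : Type} [AddCommGroup A] [Module k[X] A],
    HasPermRes k p s A → HasPermRes k p (s + 1) A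
  | 0, A, _, _, h => ⟨A, _, _, LinearMap.id, h, Function.surjective_id,
      by rw [LinearMap.ker_id]; exact IsPermMod.of_subsingleton p _⟩
  | _ + 1, _, _, _, ⟨P, _, _, π, hP, hπ, hK⟩ => ⟨P, _, _, π, hP, hπ, succ hK⟩

theorem mono {s s' : ℕ} (hs : s ≤ s') {A : Type} [AddCommGroup A] [Module k[X] A]
    (h : HasPermRes k p s A) : HasPermRes k p s' A := by
  induction s', hs using Nat.le_induction with
  | base => exact h
  | succ _ _ ih => exact ih.succ

theorem prod : ∀ {s : ℕ} {A B : Type} [AddCommGroup A] [Module k[X] A]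
    [AddCommGroup B] [Module k[X] B],
    HasPermRes k p s A → HasPermRes k p s B → HasPermRes k p s (A × B)
  | 0, _, _, _, _, _, _, hA, hB => IsPermMod.prod hA hB
  | _ + 1, _, _, _, _, _, _, ⟨_, _, _, πA, hPA, hπA, hKA⟩, ⟨_, _, _, πB, hPB, hπB, hKB⟩ => by
    refine ⟨_, _, _, πA.prodMap πB, hPA.prod hPB, Prod.map_surjective.mpr ⟨hπA, hπB⟩, ?_⟩
    rw [LinearMap.ker_prodMap]
    exact (prod hKA hKB).of_linearEquiv (Submodule.prodLinearEquivProd _ _).symm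

theorem pi {s : ℕ} : ∀ {n : ℕ} {φ : Fin n → Type} [∀ i, AddCommGroup (φ i)]
    [∀ i, Module k[X] (φ i)], (∀ i, HasPermRes k p s (φ i)) → HasPermRes k p s (∀ i, φ i)
  | 0, _, _, _, _ => mono (Nat.zero_le s) (IsPermMod.of_subsingleton p _)
  | _ + 1, φ, _, _, h =>
    ((h 0).prod (pi fun i => h i.succ)).of_linearEquiv (Fin.consLinearEquiv k[X] φ)

theorem succ_of_exact {s d : ℕ} {P N : Type} [AddCommGroup P] [Module k[X] P]
    [AddCommGroup N] [Module k[X] N] (hP : IsPermMod k p P) {ψ : k[X] →ₗ[k[X]] P}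
    {π : P →ₗ[k[X]] N} (hexact : Function.Exact ψ π) (hπ : Function.Surjective π)
    (hψ : LinearMap.ker ψ = Ideal.span {T ^ d}) (h : HasPermRes k p s (Mmod k d)) :
    HasPermRes k p (s + 1) N :=
  ⟨P, _, _, π, hP, hπ, h.of_linearEquiv <| (Submodule.quotEquivOfEq _ _ hψ.symm).trans <|
    ψ.quotKerEquivRange.trans (LinearEquiv.ofEq _ _ (LinearMap.exact_iff.mp hexact).symm)⟩

end HasPermRes

namespace Mmod

def mulPow {a b : ℕ} (e : ℕ) (h : b ≤ a + e) : Mmod k a →ₗ[k[X]] Mmod k b :=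
  Submodule.mapQ _ _ (LinearMap.mulLeft k[X] (T ^ e)) <| by
    rw [Ideal.span_le, Set.singleton_subset_iff, SetLike.mem_coe, Submodule.mem_comap,
      LinearMap.mulLeft_apply, ← pow_add, Ideal.mem_span_singleton]
    exact pow_dvd_pow X (by omega)

theorem mulPow_mk {a b e : ℕ} (h : b ≤ a + e) (g : k[X]) :
    mulPow e h (Submodule.Quotient.mk g : Mmod k a) = Submodule.Quotient.mk (T ^ e * g) :=
  rfl

theorem mulPow_surjective {a b : ℕ} (h : b ≤ a) : Function.Surjective (mulPow (k := k) 0 h) := by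
  intro y
  obtain ⟨g, rfl⟩ := Submodule.Quotient.mk_surjective _ y
  exact ⟨Submodule.Quotient.mk g, by rw [mulPow_mk, pow_zero, one_mul]⟩

def mkPow (a e : ℕ) : k[X] →ₗ[k[X]] Mmod k a :=
  T ^ e • (Ideal.span {T ^ a}).mkQ

theorem mkPow_apply (a e : ℕ) (g : k[X]) :
    mkPow a e g = (Submodule.Quotient.mk (T ^ e * g) : Mmod k a) := by
  rw [mkPow, LinearMap.smul_apply, Submodule.mkQ_apply, smul_mk_s14]

theorem ker_mkPow {a e : ℕ} (h : e ≤ a) :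
    LinearMap.ker (mkPow (k := k) a e) = Ideal.span {T ^ (a - e)} := by
  ext g
  rw [LinearMap.mem_ker, mkPow_apply, mk_eq_zero_iff, Ideal.mem_span_singleton,
    ← Nat.add_sub_cancel' h, pow_add, Nat.add_sub_cancel_left,
    mul_dvd_mul_iff_left (pow_ne_zero e X_ne_zero)]

theorem exact_mkPow_mulPow {a b : ℕ} (h : b ≤ a) :
    Function.Exact (mkPow (k := k) a b) (mulPow 0 (by omega : b ≤ a + 0)) := by
  intro y
  obtain ⟨g, rfl⟩ := Submodule.Quotient.mk_surjective _ y
  rw [mulPow_mk, pow_zero, one_mul, mk_eq_zero_iff]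
  constructor
  · rintro ⟨g', rfl⟩
    exact ⟨g', mkPow_apply a b g'⟩
  · rintro ⟨g', hg'⟩
    rw [mkPow_apply, mk_eq_mk_iff] at hg'
    exact (dvd_sub_right (dvd_mul_right _ g')).mp ((pow_dvd_pow X h).trans hg')

theorem exact_mkPow_prod_coprod {a c : ℕ} (h1 : 1 ≤ c) (hc : c ≤ a) :
    Function.Exact ((mkPow (k := k) a (c - 1)).prod (mkPow 1 0))
      ((mulPow 0 (by omega : c ≤ a + 0)).coprod
        (-mulPow (c - 1) (by omega : c ≤ 1 + (c - 1)))) := by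
  rintro ⟨y₀, y₁⟩
  obtain ⟨g₀, rfl⟩ := Submodule.Quotient.mk_surjective _ y₀
  obtain ⟨g₁, rfl⟩ := Submodule.Quotient.mk_surjective _ y₁
  simp only [LinearMap.coprod_apply, LinearMap.neg_apply, mulPow_mk, Set.mem_range,
    LinearMap.prod_apply, Function.prod, mkPow_apply, Prod.mk.injEq, pow_zero, one_mul,
    ← sub_eq_add_neg, ← Submodule.Quotient.mk_sub, mk_eq_mk_iff, mk_eq_zero_iff]
  have hXc : T ^ c = T ^ (c - 1) * T := by rw [← pow_succ, Nat.sub_add_cancel h1]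
  constructor
  · rintro ⟨g', hg'⟩
    refine ⟨g₁ + T * g', ?_, ?_⟩
    · rw [mul_add, ← mul_assoc, ← hXc, ← hg']
      simp
    · simp
  · rintro ⟨g, hg₀, hg₁⟩
    have hsplit : g₀ - T ^ (c - 1) * g₁ = -(T ^ (c - 1) * g - g₀) + T ^ (c - 1) * (g - g₁) := by
      ring
    rw [hsplit]
    refine dvd_add ((pow_dvd_pow X hc).trans hg₀).neg_right ?_
    rw [hXc]
    exact mul_dvd_mul_left _ (by simpa using hg₁)

theorem ker_mkPow_prod {a c : ℕ} (h1 : 1 ≤ c) (hc : c ≤ a) :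
    LinearMap.ker ((mkPow (k := k) a (c - 1)).prod (mkPow 1 0)) =
      Ideal.span {T ^ (a - c + 1)} := by
  rw [LinearMap.ker_prod, ker_mkPow (by omega), ker_mkPow (Nat.zero_le 1),
    show a - (c - 1) = a - c + 1 by omega]
  exact inf_eq_left.mpr (Ideal.span_singleton_le_span_singleton.mpr (pow_dvd_pow X (by omega)))

end Mmod

theorem IsSizeFun.hasPermRes_mmod {p : ℕ} {f : ℕ → ℕ} (hf : IsSizeFun p f) {c : ℕ} (h1 : 1 ≤ c)
    (hc : c ≤ p) : HasPermRes k p (f c) (Mmod k c) := by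
  induction hs : f c generalizing c with
  | zero =>
    obtain rfl | rfl : c = 1 ∨ c = p := by
      by_contra h
      have := hf.2.2 c (by omega) (by omega)
      omega
    exacts [isPermMod_mmod_one _, isPermMod_mmod_self _]
  | succ s ih =>
    have hc1 : c ≠ 1 := by
      rintro rfl
      rw [hf.1] at hs
      omega
    have hcp : c ≠ p := by
      rintro rfl
      rw [hf.2.1] at hs
      omega
    have h2 : 2 ≤ c ∧ c ≤ p - 1 := by omega
    rw [hf.2.2 c h2.1 h2.2, Nat.add_right_cancel_iff] at hs
    rcases min_choice (f (p - c)) (f (p - c + 1)) with hmin | hmin <;> rw [hmin] at hs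
    · exact (ih (by omega) (by omega) hs).succ_of_exact (isPermMod_mmod_self p)
        (Mmod.exact_mkPow_mulPow hc) (Mmod.mulPow_surjective hc) (Mmod.ker_mkPow hc)
    · exact (ih (by omega) (by omega) hs).succ_of_exact
        ((isPermMod_mmod_self p).prod (isPermMod_mmod_one p)) (Mmod.exact_mkPow_prod_coprod h1 hc)
        ((Mmod.mulPow_surjective hc).forall.mpr fun x => ⟨(x, 0), by simp⟩)
        (Mmod.ker_mkPow_prod h1 hc)

/-- For `1 ≤ t` and `N` a direct sum of modules `M_i`, this says that `M_t` is a summand. -/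
def HasBlock (k : Type) [Field k] (t : ℕ) (N : Type*) [AddCommGroup N] [Module k[X] N] : Prop :=
  ∃ m : N, (X : k[X]) ^ t • m = 0 ∧ ∀ z : N, (X : k[X]) ^ (t - 1) • m ≠ (X : k[X]) ^ t • z

namespace HasBlock

variable {t : ℕ}

theorem of_linearEquiv {A B : Type*} [AddCommGroup A] [Module k[X] A] [AddCommGroup B]
    [Module k[X] B] (e : A ≃ₗ[k[X]] B) (h : HasBlock k t A) : HasBlock k t B := by
  obtain ⟨m, hm, hm'⟩ := h
  refine ⟨e m, by rw [← map_smul, hm, map_zero], fun z hz => hm' (e.symm z) ?_⟩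
  rw [← e.symm_apply_apply (_ • m), map_smul, hz, map_smul]

theorem pi {ι : Type*} [DecidableEq ι] {φ : ι → Type*} [∀ i, AddCommGroup (φ i)]
    [∀ i, Module k[X] (φ i)] {i : ι} (h : HasBlock k t (φ i)) : HasBlock k t (∀ i, φ i) := by
  obtain ⟨m, hm, hm'⟩ := h
  refine ⟨Pi.single i m, by rw [← Pi.single_smul, hm, Pi.single_zero], fun z hz => hm' (z i) ?_⟩
  simpa using congr_fun hz i

end HasBlock

theorem hasBlock_submodule_iff {t : ℕ} {P : Type*} [AddCommGroup P] [Module k[X] P]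
    {K : Submodule k[X] P} :
    HasBlock k t K ↔ ∃ y ∈ K, T ^ t • y = 0 ∧ ∀ z ∈ K, T ^ (t - 1) • y ≠ T ^ t • z := by
  simp only [HasBlock, Subtype.exists, Subtype.forall, ne_eq, Subtype.ext_iff, Submodule.coe_smul,
    Submodule.coe_zero, exists_prop]

theorem Mmod.hasBlock {a : ℕ} (ha : 1 ≤ a) : HasBlock k a (Mmod k a) := by
  refine ⟨Submodule.Quotient.mk 1, by rw [smul_mk_s14, mk_eq_zero_iff, mul_one], fun z hz => ?_⟩
  obtain ⟨g, rfl⟩ := Submodule.Quotient.mk_surjective _ z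
  rw [smul_mk_s14, smul_mk_s14, mk_eq_mk_iff, mul_one] at hz
  have : T ^ a ∣ T ^ (a - 1) := (dvd_sub_left (dvd_mul_right _ g)).mp hz
  have := (pow_dvd_pow_iff X_ne_zero not_isUnit_X).mp this
  omega

namespace IsPermMod

variable {p : ℕ} {P : Type} [AddCommGroup P] [Module k[X] P]

theorem not_hasBlock (hP : IsPermMod k p P) {t : ℕ} (h2 : 2 ≤ t) (ht : t ≤ p - 1) :
    ¬ HasBlock k t P := by
  rintro ⟨m, hm, hm'⟩
  obtain ⟨b, ξ, rfl, hξ⟩ := hP.exists_of_pow_smul_eq_zero (by omega) hm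
  apply hm' (T ^ (p - 1 - t) • b)
  rw [smul_add, pow_smul_eq_zero_of_le (m := ξ) (a := 1) (by omega) (by rwa [pow_one]), add_zero,
    smul_smul, smul_smul, ← pow_add, ← pow_add]
  congr 2
  omega

/-- Lift a block generator `m` to `x ∈ P`. Either `T^t x ∈ ker π` generates a block of size
`p - t`, or `T^(p-1) x = T^(p-t) w` with `w ∈ ker π`, and then `w` generates a block of size
`p - t + 1`, since otherwise `T^(t-1) m ∈ T^t N`. -/
theorem hasBlock_ker {N : Type} [AddCommGroup N] [Module k[X] N] (hP : IsPermMod k p P)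
    {π : P →ₗ[k[X]] N} (hπ : Function.Surjective π) {t : ℕ} (h2 : 2 ≤ t) (ht : t ≤ p - 1)
    (h : HasBlock k t N) :
    HasBlock k (p - t) (LinearMap.ker π) ∨ HasBlock k (p - t + 1) (LinearMap.ker π) := by
  obtain ⟨m, hm, hm'⟩ := h
  obtain ⟨x, rfl⟩ := hπ m
  have hpx : T ^ p • x = 0 := hP.pow_smul_eq_zero (by omega) x
  simp only [hasBlock_submodule_iff, LinearMap.mem_ker]
  by_cases h₁ : ∃ w, π w = 0 ∧ T ^ (p - 1) • x = T ^ (p - t) • w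
  · obtain ⟨w, hw, hxw⟩ := h₁
    right
    refine ⟨w, hw, ?_, fun z hz hwz => ?_⟩
    · rw [pow_succ', mul_smul, ← hxw, smul_smul, ← pow_succ', Nat.sub_add_cancel (by omega), hpx]
    have hzx : T ^ (p - (t - 1)) • (z - T ^ (t - 2) • x) = 0 := by
      rw [smul_sub, smul_smul, ← pow_add, show p - (t - 1) = p - t + 1 by omega, ← hwz,
        Nat.add_sub_cancel, ← hxw, show p - t + 1 + (t - 2) = p - 1 by omega, sub_self]
    obtain ⟨b, ξ, hb, hξ⟩ := hP.exists_of_pow_smul_eq_zero (by omega) hzx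
    rw [show p - (p - (t - 1)) = t - 1 by omega] at hb
    apply hm' (-π b)
    calc T ^ (t - 1) • π x = T • π (T ^ (t - 2) • x) := by
          rw [map_smul, smul_smul, ← pow_succ', show t - 2 + 1 = t - 1 by omega]
      _ = T • π (z - (T ^ (t - 1) • b + ξ)) := by rw [← hb, sub_sub_cancel]
      _ = T ^ t • -π b := by
          rw [map_sub, hz, zero_sub, smul_neg, map_add, smul_add, ← map_smul π T ξ, hξ, map_zero,
            add_zero, map_smul, smul_smul, ← pow_succ', Nat.sub_add_cancel (by omega), smul_neg]
  · left
    refine ⟨T ^ t • x, by rw [map_smul, hm], ?_, fun z hz hxz => h₁ ⟨z, hz, ?_⟩⟩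
    · rw [smul_smul, ← pow_add, Nat.sub_add_cancel (by omega), hpx]
    · rw [← hxz, smul_smul, ← pow_add]
      congr 2
      omega

end IsPermMod

namespace IsSizeFun

variable {p : ℕ} {f : ℕ → ℕ}

theorem eq_zero_or (hf : IsSizeFun p f) {t : ℕ} (h1 : 1 ≤ t) (hp : t ≤ p) :
    f t = 0 ∨ 2 ≤ t ∧ t ≤ p - 1 := by
  obtain rfl | rfl | h := (by omega : t = 1 ∨ t = p ∨ 2 ≤ t ∧ t ≤ p - 1)
  exacts [Or.inl hf.1, Or.inl hf.2.1, Or.inr h]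

theorem le_of_hasPermRes (hf : IsSizeFun p f) {s : ℕ} {N : Type} [AddCommGroup N]
    [Module k[X] N] (hN : HasPermRes k p s N) {t : ℕ} (h1 : 1 ≤ t) (hp : t ≤ p)
    (hb : HasBlock k t N) : f t ≤ s := by
  induction s generalizing N t with
  | zero =>
    rcases hf.eq_zero_or h1 hp with h0 | ⟨h2, ht⟩
    · exact h0.le
    · exact absurd hb (IsPermMod.not_hasBlock hN h2 ht)
  | succ s ih =>
    rcases hf.eq_zero_or h1 hp with h0 | ⟨h2, ht⟩
    · omega
    obtain ⟨P, _, _, π, hP, hπ, hK⟩ := hN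
    rw [hf.2.2 t h2 ht, Nat.add_le_add_iff_right]
    rcases hP.hasBlock_ker hπ h2 ht hb with hK' | hK'
    · exact (min_le_left _ _).trans (ih hK (by omega) (by omega) hK')
    · exact (min_le_right _ _).trans (ih hK (by omega) (by omega) hK')

end IsSizeFun

theorem stmt14_general (k : Type) [Field k] (p : ℕ)
    (M : Type) [AddCommGroup M] [Module (Polynomial k) M]
    (n : ℕ) (c : Fin n → ℕ) (hc : ∀ i, 1 ≤ c i ∧ c i ≤ p)
    (e : M ≃ₗ[Polynomial k] ((i : Fin n) → Mmod k (c i)))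
    (f : ℕ → ℕ) (hf : IsSizeFun p f) :
    ppdim k p M = Finset.univ.sup (fun i => f (c i)) := by
  have hres : HasPermRes k p (Finset.univ.sup fun i => f (c i)) M :=
    (HasPermRes.pi fun i => (hf.hasPermRes_mmod (hc i).1 (hc i).2).mono
      (Finset.le_sup (Finset.mem_univ i))).of_linearEquiv e.symm
  refine le_antisymm (Nat.sInf_le hres) <|
    le_csInf ⟨_, hres⟩ fun s hs => Finset.sup_le fun i _ => ?_
  exact hf.le_of_hasPermRes hs (hc i).1 (hc i).2
    ((Mmod.hasBlock (hc i).1).pi.of_linearEquiv e.symm)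

/-- For every finitely generated `kC_p`-module `M`, `ppdim M = size M`, the maximum of
the `p`-distances of the invariants of `M`. -/
theorem stmt14 (k : Type) [Field k] (p : ℕ) (hp : p.Prime) [CharP k p]
    (M : Type) [AddCommGroup M] [Module (Polynomial k) M] [Module.Finite (Polynomial k) M]
    (hann : ∀ m : M, (X : Polynomial k) ^ p • m = 0)
    (n : ℕ) (c : Fin n → ℕ) (hc : ∀ i, 1 ≤ c i ∧ c i ≤ p)
    (e : M ≃ₗ[Polynomial k] ((i : Fin n) → Mmod k (c i)))
    (f : ℕ → ℕ) (hf : IsSizeFun p f) :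
    ppdim k p M = Finset.univ.sup (fun i => f (c i)) :=
  stmt14_general k p M n c hc e f hf
end
end
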